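/- arXiv:1610.04187 — 7 statements merged into one kernel-verified Lean document; each statement's English description precedes it below -/
import Mathlib

section
/- A permutation σ of [n] is a Baxter permutation if and only if its inverse σ⁻¹ is a Baxter permutation. -/
/-- σ avoids the vincular pattern 2-41-3: there are no indices
`i < j < j+1 < k` with `σ (j+1) < σ i < σ k < σ j`. -/
def Avoids2413 {n : ℕ} (σ : Equiv.Perm (Fin n)) : Prop :=
  ¬ ∃ (i k : Fin n) (j : ℕ) (hj : j + 1 < n),
      i.1 < j ∧ j + 1 < k.1 ∧
      σ ⟨j + 1, hj⟩ < σ i ∧ σ i < σ k ∧ σ k < σ ⟨j, Nat.lt_of_succ_lt hj⟩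

/-- σ avoids the vincular pattern 3-14-2: there are no indices
`i < j < j+1 < k` with `σ j < σ k < σ i < σ (j+1)`. -/
def Avoids3142 {n : ℕ} (σ : Equiv.Perm (Fin n)) : Prop :=
  ¬ ∃ (i k : Fin n) (j : ℕ) (hj : j + 1 < n),
      i.1 < j ∧ j + 1 < k.1 ∧
      σ ⟨j, Nat.lt_of_succ_lt hj⟩ < σ k ∧ σ k < σ i ∧ σ i < σ ⟨j + 1, hj⟩

/-- A Baxter permutation avoids the vincular patterns 2-41-3 and 3-14-2. -/
def IsBaxter {n : ℕ} (σ : Equiv.Perm (Fin n)) : Prop :=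
  Avoids2413 σ ∧ Avoids3142 σ

/-!
An occurrence of 2-41-3 in `σ⁻¹` at the adjacent values `j, j+1` means that in `σ` the value
`j + 1` stands left of, and `j` right of, a stretch of positions on which `σ` starts below `j`
and ends above `j + 1`. Walking along that stretch, `σ` must jump over the pair `{j, j+1}` in a
single ascent, and that ascent together with the positions of `j + 1` and `j` is an occurrence
of 3-14-2 in `σ`. Dually, 3-14-2 in `σ⁻¹` yields a descent jumping over `{j, j+1}`, hence
2-41-3 in `σ`. So each Baxter pattern in `σ⁻¹` forces the other one in `σ`.
-/

theorem Nat.exists_not_and_succ_of_not_of_le {P : ℕ → Prop} {a b : ℕ} (hab : a ≤ b)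
    (ha : ¬P a) (hb : P b) : ∃ m, a ≤ m ∧ m < b ∧ ¬P m ∧ P (m + 1) := by
  -- clamping the shift at `b - a` keeps the jump inside `[a, b]`
  obtain ⟨k, hk, hk1⟩ := Nat.exists_not_and_succ_of_not_zero_of_exists
    (p := fun k => P (a + min k (b - a))) (by simpa using ha) ⟨b - a, by simpa [hab] using hb⟩
  have hkb : k < b - a := by
    by_contra! h
    rw [min_eq_right h] at hk
    rw [min_eq_right (by omega)] at hk1
    exact hk hk1
  rw [min_eq_left hkb.le] at hk
  rw [min_eq_left hkb] at hk1
  exact ⟨a + k, by omega, by omega, hk, hk1⟩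

theorem Fin.covBy_mk_succ {n j : ℕ} (hj : j + 1 < n) :
    (⟨j, Nat.lt_of_succ_lt hj⟩ : Fin n) ⋖ ⟨j + 1, hj⟩ :=
  ⟨by simp [Fin.lt_def], fun c h₁ h₂ => by simp only [Fin.lt_def] at h₁ h₂; omega⟩

section Crossing

variable {α : Type*} [LinearOrder α] {n : ℕ} {f : Fin n → α} {a b : Fin n} {v w : α}

theorem exists_ascent_across_covBy (hab : a ≤ b) (hvw : v ⋖ w) (ha : f a < v) (hb : w < f b)
    (hv : ∀ m ∈ Set.Icc a b, f m ≠ v) (hw : ∀ m ∈ Set.Icc a b, f m ≠ w) :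
    ∃ (j : ℕ) (hj : j + 1 < n), a.1 ≤ j ∧ j + 1 ≤ b.1 ∧
      f ⟨j, Nat.lt_of_succ_lt hj⟩ < v ∧ w < f ⟨j + 1, hj⟩ := by
  obtain ⟨j, haj, hjb, hj, hj1⟩ := Nat.exists_not_and_succ_of_not_of_le
    (P := fun m => ∀ hm : m < n, v < f ⟨m, hm⟩) (Fin.le_def.mp hab)
    (fun h => (h a.2).not_gt ha) (fun _ => hvw.lt.trans hb)
  have hjn : j + 1 < n := Nat.lt_of_le_of_lt hjb b.2
  have hmem : ∀ m (hm : m < n), a.1 ≤ m → m ≤ b.1 → (⟨m, hm⟩ : Fin n) ∈ Set.Icc a b :=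
    fun m hm ham hmb => ⟨Fin.le_def.mpr ham, Fin.le_def.mpr hmb⟩
  have hjv : f ⟨j, Nat.lt_of_succ_lt hjn⟩ < v :=
    lt_of_le_of_ne (not_lt.mp fun h => hj fun _ => h) (hv _ (hmem j _ haj hjb.le))
  have hj1w : w < f ⟨j + 1, hjn⟩ :=
    lt_of_le_of_ne (hvw.lt_iff_le_right.mp (hj1 hjn))
      (hw _ (hmem (j + 1) hjn (haj.trans j.le_succ) hjb)).symm
  exact ⟨j, hjn, haj, hjb, hjv, hj1w⟩

theorem exists_descent_across_covBy (hab : a ≤ b) (hvw : v ⋖ w) (ha : w < f a) (hb : f b < v)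
    (hv : ∀ m ∈ Set.Icc a b, f m ≠ v) (hw : ∀ m ∈ Set.Icc a b, f m ≠ w) :
    ∃ (j : ℕ) (hj : j + 1 < n), a.1 ≤ j ∧ j + 1 ≤ b.1 ∧
      w < f ⟨j, Nat.lt_of_succ_lt hj⟩ ∧ f ⟨j + 1, hj⟩ < v :=
  exists_ascent_across_covBy (f := OrderDual.toDual ∘ f) hab hvw.toDual ha hb hw hv

end Crossing

namespace Equiv.Perm

variable {n : ℕ} {σ : Equiv.Perm (Fin n)}

theorem apply_ne_of_notMem_Icc {a b q : Fin n} (hq : q ∉ Set.Icc a b) :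
    ∀ m ∈ Set.Icc a b, σ m ≠ σ q :=
  fun _ hm h => hq (σ.injective h ▸ hm)

theorem avoids2413_inv_of_avoids3142 (h : Avoids3142 σ) : Avoids2413 σ⁻¹ := by
  rintro ⟨i, k, j, hj, hij, hjk, h₁, h₂, h₃⟩
  set q : Fin n := σ⁻¹ ⟨j, Nat.lt_of_succ_lt hj⟩
  set q' : Fin n := σ⁻¹ ⟨j + 1, hj⟩
  have hσq : σ q = ⟨j, Nat.lt_of_succ_lt hj⟩ := σ.apply_symm_apply _
  have hσq' : σ q' = ⟨j + 1, hj⟩ := σ.apply_symm_apply _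
  obtain ⟨j₀, hj₀, ha, hb, hlo, hhi⟩ := exists_ascent_across_covBy (f := σ) h₂.le
    (Fin.covBy_mk_succ hj) (by simpa [Fin.lt_def] using hij) (by simpa [Fin.lt_def] using hjk)
    (hσq ▸ apply_ne_of_notMem_Icc fun hm => h₃.not_ge hm.2)
    (hσq' ▸ apply_ne_of_notMem_Icc fun hm => h₁.not_ge hm.1)
  refine h ⟨q', q, j₀, hj₀, ?_, ?_, ?_, ?_, ?_⟩
  · exact lt_of_lt_of_le (Fin.lt_def.mp h₁) ha
  · exact lt_of_le_of_lt hb (Fin.lt_def.mp h₃)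
  · rwa [hσq]
  · rw [hσq, hσq']; exact (Fin.covBy_mk_succ hj).lt
  · rwa [hσq']

theorem avoids3142_inv_of_avoids2413 (h : Avoids2413 σ) : Avoids3142 σ⁻¹ := by
  rintro ⟨i, k, j, hj, hij, hjk, h₁, h₂, h₃⟩
  set q : Fin n := σ⁻¹ ⟨j, Nat.lt_of_succ_lt hj⟩
  set q' : Fin n := σ⁻¹ ⟨j + 1, hj⟩
  have hσq : σ q = ⟨j, Nat.lt_of_succ_lt hj⟩ := σ.apply_symm_apply _
  have hσq' : σ q' = ⟨j + 1, hj⟩ := σ.apply_symm_apply _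
  obtain ⟨j₀, hj₀, ha, hb, hhi, hlo⟩ := exists_descent_across_covBy (f := σ) h₂.le
    (Fin.covBy_mk_succ hj) (by simpa [Fin.lt_def] using hjk) (by simpa [Fin.lt_def] using hij)
    (hσq ▸ apply_ne_of_notMem_Icc fun hm => h₁.not_ge hm.1)
    (hσq' ▸ apply_ne_of_notMem_Icc fun hm => h₃.not_ge hm.2)
  refine h ⟨q, q', j₀, hj₀, ?_, ?_, ?_, ?_, ?_⟩
  · exact lt_of_lt_of_le (Fin.lt_def.mp h₁) ha
  · exact lt_of_le_of_lt hb (Fin.lt_def.mp h₃)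
  · rwa [hσq]
  · rw [hσq, hσq']; exact (Fin.covBy_mk_succ hj).lt
  · rwa [hσq']

end Equiv.Perm

theorem IsBaxter.inv {n : ℕ} {σ : Equiv.Perm (Fin n)} (h : IsBaxter σ) : IsBaxter σ⁻¹ :=
  ⟨σ.avoids2413_inv_of_avoids3142 h.2, σ.avoids3142_inv_of_avoids2413 h.1⟩

theorem baxter_iff_inverse_baxter {n : ℕ} (σ : Equiv.Perm (Fin n)) :
    IsBaxter σ ↔ IsBaxter σ⁻¹ :=
  ⟨IsBaxter.inv, fun h => inv_inv σ ▸ h.inv⟩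
end

section
/- A permutation σ of [n] is a Baxter permutation if and only if σ contains no subsequence σ_i σ_j σ_k σ_l (with i < j < k < l) such that |σ_l − σ_i| = 1 and the subsequence is an occurrence of the classical pattern 2-4-1-3 (i.e., σ_k < σ_i < σ_l < σ_j) or of the classical pattern 3-1-4-2 (i.e., σ_j < σ_l < σ_i < σ_k). -/
private lemma ivt' (P : ℕ → Prop) : ∀ {a b : ℕ}, a ≤ b → P a → ¬ P b →
    ∃ m, a ≤ m ∧ m < b ∧ P m ∧ ¬ P (m+1) := by
  intro a b
  induction b with
  | zero =>
    intro hab ha hb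
    obtain rfl : a = 0 := Nat.le_zero.mp hab
    exact absurd ha hb
  | succ b ih =>
    intro hab ha hb
    by_cases h : P b
    · have hab' : a ≠ b + 1 := fun e => hb (e ▸ ha)
      exact ⟨b, by omega, Nat.lt_succ_self b, h, hb⟩
    · have hab' : a ≤ b := by
        rcases Nat.lt_succ_iff_lt_or_eq.mp (Nat.lt_succ_of_le hab) with h' | h'
        · omega
        · exact absurd (h' ▸ ha) hb
      obtain ⟨m, h1, h2, h3, h4⟩ := ih hab' ha h
      exact ⟨m, h1, by omega, h3, h4⟩

private lemma val_ne_of_ne {n : ℕ} (σ : Equiv.Perm (Fin n)) {x y : Fin n}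
    (h : x.1 ≠ y.1) : (σ x).1 ≠ (σ y).1 :=
  fun e => h (congrArg Fin.val (σ.injective (Fin.ext e)))

/-- A permutation is Baxter iff it contains no (classical) occurrence of
2-4-1-3 or 3-1-4-2 in which the values playing the roles of the first and
last entries differ by one. -/
theorem baxter_iff_no_unit_2413_3142 {n : ℕ} (σ : Equiv.Perm (Fin n)) :
    IsBaxter σ ↔
      ¬ ∃ i j k l : Fin n, i < j ∧ j < k ∧ k < l ∧
        ((σ l).1 = (σ i).1 + 1 ∨ (σ i).1 = (σ l).1 + 1) ∧
        ((σ k < σ i ∧ σ i < σ l ∧ σ l < σ j) ∨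
         (σ j < σ l ∧ σ l < σ i ∧ σ i < σ k)) := by
  constructor
  · rintro ⟨h2413, h3142⟩ ⟨i, j, k, l, hij, hjk, hkl, hunit, hpat⟩
    rw [Fin.lt_def] at hij hjk hkl
    rcases hpat with ⟨p1, p2, p3⟩ | ⟨p1, p2, p3⟩
    · -- classical 2413 occurrence: σ k < σ i < σ l < σ j, (σ l).1 = (σ i).1 + 1
      rw [Fin.lt_def] at p1 p2 p3
      obtain ⟨m, hm1, hm2, ⟨hmn, hm3⟩, hm4⟩ :=
        ivt' (fun p => ∃ h : p < n, (σ i).1 < (σ ⟨p, h⟩).1) (le_of_lt hjk)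
          ⟨j.2, by rw [Fin.eta]; omega⟩
          (by rintro ⟨h, hlt⟩; rw [Fin.eta] at hlt; omega)
      have hj' : m + 1 < n := by have := k.2; omega
      have h4' : ¬ (σ i).1 < (σ ⟨m + 1, hj'⟩).1 := fun hlt => hm4 ⟨hj', hlt⟩
      have hne1 : (σ ⟨m + 1, hj'⟩).1 ≠ (σ i).1 :=
        val_ne_of_ne σ (show m + 1 ≠ i.1 by omega)
      have hm3' : (σ i).1 < (σ ⟨m, Nat.lt_of_succ_lt hj'⟩).1 := hm3
      have hne2 : (σ ⟨m, Nat.lt_of_succ_lt hj'⟩).1 ≠ (σ l).1 :=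
        val_ne_of_ne σ (show m ≠ l.1 by omega)
      exact h2413 ⟨i, l, m, hj', by omega, by omega,
        Fin.lt_def.mpr (by omega), Fin.lt_def.mpr (by omega), Fin.lt_def.mpr (by omega)⟩
    · -- classical 3142 occurrence: σ j < σ l < σ i < σ k, (σ i).1 = (σ l).1 + 1
      rw [Fin.lt_def] at p1 p2 p3
      obtain ⟨m, hm1, hm2, ⟨hmn, hm3⟩, hm4⟩ :=
        ivt' (fun p => ∃ h : p < n, (σ ⟨p, h⟩).1 < (σ l).1) (le_of_lt hjk)
          ⟨j.2, by rw [Fin.eta]; omega⟩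
          (by rintro ⟨h, hlt⟩; rw [Fin.eta] at hlt; omega)
      have hj' : m + 1 < n := by have := k.2; omega
      have h4' : ¬ (σ ⟨m + 1, hj'⟩).1 < (σ l).1 := fun hlt => hm4 ⟨hj', hlt⟩
      have hne1 : (σ ⟨m + 1, hj'⟩).1 ≠ (σ l).1 :=
        val_ne_of_ne σ (show m + 1 ≠ l.1 by omega)
      have hne2 : (σ ⟨m + 1, hj'⟩).1 ≠ (σ i).1 :=
        val_ne_of_ne σ (show m + 1 ≠ i.1 by omega)
      have hm3' : (σ ⟨m, Nat.lt_of_succ_lt hj'⟩).1 < (σ l).1 := hm3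
      exact h3142 ⟨i, l, m, hj', by omega, by omega,
        Fin.lt_def.mpr (by omega), Fin.lt_def.mpr (by omega), Fin.lt_def.mpr (by omega)⟩
  · intro hno
    constructor
    · rintro ⟨i, k, m, hj, h1, h2, h3, h4, h5⟩
      rw [Fin.lt_def] at h3 h4 h5
      obtain ⟨v, hv1, hv2, ⟨hvn, hv3⟩, hv4⟩ :=
        ivt' (fun v => ∃ h : v < n, (σ.symm ⟨v, h⟩).1 < m) (le_of_lt h4)
          ⟨(σ i).2, by rw [Fin.eta, Equiv.symm_apply_apply]; exact h1⟩
          (by rintro ⟨h, hlt⟩; rw [Fin.eta, Equiv.symm_apply_apply] at hlt; omega)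
      have hv'n : v + 1 < n := by have := (σ k).2; omega
      set a := σ.symm ⟨v, hvn⟩ with ha
      set b := σ.symm ⟨v + 1, hv'n⟩ with hb
      have hsa : (σ a).1 = v := by rw [ha, Equiv.apply_symm_apply]
      have hsb : (σ b).1 = v + 1 := by rw [hb, Equiv.apply_symm_apply]
      have hbm : ¬ b.1 < m := fun hlt => hv4 ⟨hv'n, hlt⟩
      have hbne1 : b.1 ≠ m := by
        intro e
        have e' : b = ⟨m, Nat.lt_of_succ_lt hj⟩ := Fin.ext e
        have : (σ b).1 = (σ ⟨m, Nat.lt_of_succ_lt hj⟩).1 := by rw [e']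
        omega
      have hbne2 : b.1 ≠ m + 1 := by
        intro e
        have e' : b = ⟨m + 1, hj⟩ := Fin.ext e
        have : (σ b).1 = (σ ⟨m + 1, hj⟩).1 := by rw [e']
        omega
      exact hno ⟨a, ⟨m, Nat.lt_of_succ_lt hj⟩, ⟨m + 1, hj⟩, b,
        Fin.lt_def.mpr hv3, Fin.lt_def.mpr (Nat.lt_succ_self m),
        Fin.lt_def.mpr (show m + 1 < b.1 by omega), Or.inl (by omega),
        Or.inl ⟨Fin.lt_def.mpr (by omega), Fin.lt_def.mpr (by omega),
          Fin.lt_def.mpr (by omega)⟩⟩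
    · rintro ⟨i, k, m, hj, h1, h2, h3, h4, h5⟩
      rw [Fin.lt_def] at h3 h4 h5
      obtain ⟨v, hv1, hv2, hv3, hv4⟩ :=
        ivt' (fun v => ∀ h : v < n, m ≤ (σ.symm ⟨v, h⟩).1) (le_of_lt h4)
          (by intro h; rw [Fin.eta, Equiv.symm_apply_apply]; omega)
          (by
            intro hall
            have := hall (σ i).2
            rw [Fin.eta, Equiv.symm_apply_apply] at this
            omega)
      push_neg at hv4
      obtain ⟨hv'n, hblt⟩ := hv4
      have hvn : v < n := by have := (σ i).2; omega
      set a := σ.symm ⟨v, hvn⟩ with ha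
      set b := σ.symm ⟨v + 1, hv'n⟩ with hb
      have hsa : (σ a).1 = v := by rw [ha, Equiv.apply_symm_apply]
      have hsb : (σ b).1 = v + 1 := by rw [hb, Equiv.apply_symm_apply]
      have ham : m ≤ a.1 := hv3 hvn
      have hane1 : a.1 ≠ m := by
        intro e
        have e' : a = ⟨m, Nat.lt_of_succ_lt hj⟩ := Fin.ext e
        have : (σ a).1 = (σ ⟨m, Nat.lt_of_succ_lt hj⟩).1 := by rw [e']
        omega
      have hane2 : a.1 ≠ m + 1 := by
        intro e
        have e' : a = ⟨m + 1, hj⟩ := Fin.ext e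
        have : (σ a).1 = (σ ⟨m + 1, hj⟩).1 := by rw [e']
        omega
      exact hno ⟨b, ⟨m, Nat.lt_of_succ_lt hj⟩, ⟨m + 1, hj⟩, a,
        Fin.lt_def.mpr hblt, Fin.lt_def.mpr (Nat.lt_succ_self m),
        Fin.lt_def.mpr (show m + 1 < a.1 by omega), Or.inr (by omega),
        Or.inr ⟨Fin.lt_def.mpr (by omega), Fin.lt_def.mpr (by omega),
          Fin.lt_def.mpr (by omega)⟩⟩
end

section
/- Let σ ≤ ψ in the right weak order on Sₙ. A permutation u ∈ Sₙ is a linear extension of the intersection of the total orders determined by σ and ψ if and only if σ ≤ u ≤ ψ in the right weak order. -/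
/-- The inversion set of a permutation: pairs of values `(ψ_i, ψ_j)` with
`i < j` and `ψ_i > ψ_j`. -/
def invSet {n : ℕ} (σ : Equiv.Perm (Fin n)) : Set (Fin n × Fin n) :=
  {p | ∃ i j : Fin n, i < j ∧ p.1 = σ i ∧ p.2 = σ j ∧ p.2 < p.1}

lemma mem_invSet {n : ℕ} (σ : Equiv.Perm (Fin n)) (p : Fin n × Fin n) :
    p ∈ invSet σ ↔ σ⁻¹ p.1 < σ⁻¹ p.2 ∧ p.2 < p.1 := by
  constructor
  · rintro ⟨i, j, hij, h1, h2, h3⟩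
    refine ⟨?_, h3⟩
    rw [h1, h2]
    simpa using hij
  · rintro ⟨h1, h2⟩
    exact ⟨σ⁻¹ p.1, σ⁻¹ p.2, h1, by simp, by simp, h2⟩

/-- If `σ ≤ ψ` in the right weak order, then `u` is a linear extension of the
intersection of the total orders determined by `σ` and `ψ` iff
`σ ≤ u ≤ ψ` in the right weak order. -/
theorem linext_of_intersection_iff_mem_weak_interval {n : ℕ}
    (σ ψ u : Equiv.Perm (Fin n)) (h : invSet σ ⊆ invSet ψ) :
    (∀ x y : Fin n, σ⁻¹ x < σ⁻¹ y → ψ⁻¹ x < ψ⁻¹ y → u⁻¹ x < u⁻¹ y) ↔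
      (invSet σ ⊆ invSet u ∧ invSet u ⊆ invSet ψ) := by
  constructor
  · intro H
    constructor
    · intro p hp
      rw [mem_invSet] at hp ⊢
      obtain ⟨h1, h2⟩ := hp
      have hψ := (mem_invSet ψ p).mp (h ((mem_invSet σ p).mpr ⟨h1, h2⟩))
      exact ⟨H p.1 p.2 h1 hψ.1, h2⟩
    · intro p hp
      rw [mem_invSet] at hp ⊢
      obtain ⟨h1, h2⟩ := hp
      refine ⟨?_, h2⟩
      by_contra hc
      push_neg at hc
      have hne : p.1 ≠ p.2 := ne_of_gt h2
      have hψ : ψ⁻¹ p.2 < ψ⁻¹ p.1 :=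
        lt_of_le_of_ne hc (by simp [hne.symm])
      rcases lt_or_gt_of_ne (show σ⁻¹ p.1 ≠ σ⁻¹ p.2 by simp [hne]) with hσ | hσ
      · have := (mem_invSet ψ p).mp (h ((mem_invSet σ p).mpr ⟨hσ, h2⟩))
        exact absurd this.1 (not_lt_of_gt hψ)
      · exact absurd (H p.2 p.1 hσ hψ) (not_lt_of_gt h1)
  · rintro ⟨hσu, huψ⟩ x y hσ hψ
    have hne : x ≠ y := by
      intro hxy; subst hxy; exact lt_irrefl _ hσ
    rcases lt_or_gt_of_ne hne with hxy | hxy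
    · by_contra hc
      push_neg at hc
      have hu : u⁻¹ y < u⁻¹ x :=
        lt_of_le_of_ne hc (by simp [hne.symm])
      have := (mem_invSet ψ (y, x)).mp (huψ ((mem_invSet u (y, x)).mpr ⟨hu, hxy⟩))
      exact absurd this.1 (not_lt_of_gt hψ)
    · exact ((mem_invSet u (x, y)).mp (hσu ((mem_invSet σ (x, y)).mpr ⟨hσ, hxy⟩))).1
end

section
/- A finite bounded poset in which every pair of elements that cover a common element has a join is a lattice. -/
section Aux

variable {α : Type*} [PartialOrder α]

lemma isLUB_pair_aux {x y s : α} (hx : x ≤ s) (hy : y ≤ s)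
    (hmin : ∀ w, x ≤ w → y ≤ w → s ≤ w) : IsLUB {x, y} s := by
  constructor
  · intro w hw
    rcases hw with rfl | hw
    · exact hx
    · rcases hw with rfl | h
      exact hy
  · intro w hw
    exact hmin w (hw (by simp)) (hw (by simp))

lemma isLUB_pair_aux' {x y s : α} (hs : IsLUB {x, y} s) :
    x ≤ s ∧ y ≤ s ∧ ∀ w, x ≤ w → y ≤ w → s ≤ w := by
  refine ⟨hs.1 (by simp), hs.1 (by simp), fun w hxw hyw => hs.2 ?_⟩
  intro v hv
  rcases hv with rfl | hv
  · exact hxw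
  · rcases hv with rfl | h
    exact hyw

end Aux

/-- A finite bounded poset in which every pair of elements covering a common
element has a join is a lattice (every pair has a join and a meet). -/
theorem finite_bounded_poset_with_joins_of_covers_is_lattice
    {α : Type*} [Fintype α] [PartialOrder α] [BoundedOrder α]
    (h : ∀ x y z : α, z ⋖ x → z ⋖ y → ∃ s, IsLUB {x, y} s) :
    ∀ x y : α, (∃ s, IsLUB {x, y} s) ∧ (∃ m, IsGLB {x, y} m) := by
  classical
  haveI : IsStronglyAtomic α :=
    IsStronglyAtomic.of_wellFounded_lt (Finite.to_wellFoundedLT).wf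
  -- Step 1: every pair with a common lower bound `z` has a join, by
  -- well-founded (downward) induction on `z`.
  have key : ∀ z x y : α, z ≤ x → z ≤ y → ∃ s, IsLUB {x, y} s := by
    intro z
    induction z using WellFounded.induction (Finite.to_wellFoundedGT (α := α)).wf with
    | _ z ih =>
      intro x y hzx hzy
      by_cases hxy : x ≤ y
      · exact ⟨y, isLUB_pair_aux hxy le_rfl fun w _ hw => hw⟩
      by_cases hyx : y ≤ x
      · exact ⟨x, isLUB_pair_aux le_rfl hyx fun w hw _ => hw⟩
      -- so z < x and z < y
      have hzx' : z < x := lt_of_le_of_ne hzx (by rintro rfl; exact hxy hzy)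
      have hzy' : z < y := lt_of_le_of_ne hzy (by rintro rfl; exact hyx hzx)
      by_cases hw : ∃ w, z < w ∧ w ≤ x ∧ w ≤ y
      · obtain ⟨w, hzw, hwx, hwy⟩ := hw
        exact ih w hzw x y hwx hwy
      push_neg at hw
      obtain ⟨x', hx'cov, hx'le⟩ := exists_covBy_le_of_lt hzx'
      obtain ⟨y', hy'cov, hy'le⟩ := exists_covBy_le_of_lt hzy'
      have hne : x' ≠ y' := by
        rintro rfl
        exact hw x' hx'cov.lt hx'le hy'le
      obtain ⟨s, hs⟩ := h x' y' z hx'cov hy'cov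
      obtain ⟨hx's, hy's, hsmin⟩ := isLUB_pair_aux' hs
      have hzs : z < s := lt_of_lt_of_le hx'cov.lt hx's
      -- join of x and s, using common lower bound x' > z
      obtain ⟨t, ht⟩ := ih x' hx'cov.lt x s hx'le hx's
      obtain ⟨hxt, hst, htmin⟩ := isLUB_pair_aux' ht
      -- join of t and y, using common lower bound y' > z
      obtain ⟨u, hu⟩ := ih y' hy'cov.lt t y (le_trans hy's hst) hy'le
      obtain ⟨htu, hyu, humin⟩ := isLUB_pair_aux' hu
      refine ⟨u, isLUB_pair_aux (le_trans hxt htu) hyu fun w hxw hyw => ?_⟩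
      have hsw : s ≤ w := hsmin w (le_trans hx'le hxw) (le_trans hy'le hyw)
      exact humin w (htmin w hxw hsw) hyw
  have joins : ∀ x y : α, ∃ s, IsLUB {x, y} s := fun x y =>
    key ⊥ x y bot_le bot_le
  -- Step 2: every finite set has a LUB.
  have finjoins : ∀ s : Finset α, ∃ u, IsLUB (↑s : Set α) u := by
    intro s
    induction s using Finset.induction with
    | empty => exact ⟨⊥, by simp [IsLUB, IsLeast, upperBounds, lowerBounds]⟩
    | @insert a s ha ihs =>
      obtain ⟨u, hu⟩ := ihs
      obtain ⟨v, hv⟩ := joins a u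
      obtain ⟨hav, huv, hvmin⟩ := isLUB_pair_aux' hv
      refine ⟨v, ?_, ?_⟩
      · intro w hw
        rcases Finset.mem_insert.1 (by exact_mod_cast hw) with rfl | hw
        · exact hav
        · exact le_trans (hu.1 hw) huv
      · intro w hw
        refine hvmin w (hw (by simp)) (hu.2 fun b hb => hw ?_)
        simp only [Finset.coe_insert, Set.mem_insert_iff]
        exact Or.inr hb
  -- Step 3: meets from joins of lower bounds.
  intro x y
  refine ⟨joins x y, ?_⟩
  obtain ⟨m, hm⟩ := finjoins ((Finset.univ.filter fun w => w ≤ x ∧ w ≤ y))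
  have hmem : ∀ w : α, w ≤ x → w ≤ y →
      w ∈ (↑(Finset.univ.filter fun w => w ≤ x ∧ w ≤ y) : Set α) := by
    intro w h1 h2
    simp [h1, h2]
  have hmx : m ≤ x := hm.2 fun w hw => by
    simp only [Finset.coe_filter, Finset.mem_univ, true_and, Set.mem_setOf_eq] at hw
    exact hw.1
  have hmy : m ≤ y := hm.2 fun w hw => by
    simp only [Finset.coe_filter, Finset.mem_univ, true_and, Set.mem_setOf_eq] at hw
    exact hw.2
  refine ⟨m, ?_, ?_⟩
  · intro w hw
    rcases hw with rfl | hw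
    · exact hmx
    · rcases hw with rfl | h
      exact hmy
  · intro w hw
    exact hm.1 (hmem w (hw (by simp)) (hw (by simp)))
end

section
/- If a finite poset P on [n] contains a chain b <_P a ⋖_P d <_P c with a < b < c < d in numerical order (a 2-14-3 chain), then some linear extension of P contains an occurrence of the vincular pattern 2-14-3; that is, there is a linear extension σ of P and indices i < j < j+1 < k with σ_j = a, σ_{j+1} = d, σ_i = b, σ_k = c. -/
/-- If a finite poset `P` on `[n]` contains a 2-14-3 chain
`b <_P a ⋖_P d <_P c` with `a < b < c < d` numerically, then some linear
extension of `P` contains an occurrence of the vincular pattern 2-14-3 with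
`a` and `d` adjacent. -/
theorem chain_2143_yields_vincular_occurrence {n : ℕ}
    (P : PartialOrder (Fin n)) (a b c d : Fin n)
    (hba : P.lt b a) (had : P.lt a d)
    (hcov : ∀ z : Fin n, ¬ (P.lt a z ∧ P.lt z d))
    (hdc : P.lt d c)
    (h1 : a < b) (h2 : b < c) (h3 : c < d) :
    ∃ σ : Equiv.Perm (Fin n),
      (∀ x y : Fin n, P.lt x y → σ⁻¹ x < σ⁻¹ y) ∧
      σ⁻¹ b < σ⁻¹ a ∧ (σ⁻¹ d).1 = (σ⁻¹ a).1 + 1 ∧ σ⁻¹ d < σ⁻¹ c := by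
  classical
  have hn : 0 < n := a.pos
  -- basic facts about P.lt
  have Plt_trans : ∀ {x y z : Fin n}, P.lt x y → P.lt y z → P.lt x z :=
    fun h1 h2 => @lt_trans _ P.toPreorder _ _ _ h1 h2
  have Plt_asymm : ∀ {x y : Fin n}, P.lt x y → ¬ P.lt y x :=
    fun h1 h2 => @lt_asymm _ P.toPreorder _ _ h1 h2
  have Plt_irrefl : ∀ x : Fin n, ¬ P.lt x x := fun x => @lt_irrefl _ P.toPreorder x
  have Plt_le : ∀ {x y : Fin n}, P.lt x y → P.le x y :=
    fun h => @le_of_lt _ P.toPreorder _ _ h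
  have Plt_ne : ∀ {x y : Fin n}, P.lt x y → x ≠ y :=
    fun h => @ne_of_lt _ P.toPreorder _ _ h
  -- Szpilrajn extension of P.le
  haveI hpo : IsPartialOrder (Fin n) P.le :=
    { refl := P.le_refl, trans := P.le_trans, antisymm := P.le_antisymm }
  obtain ⟨s, hs, hsub⟩ := extend_partialOrder P.le
  have strans : ∀ {x y z : Fin n}, s x y → s y z → s x z :=
    fun h1 h2 => hs.1.1.2.1 _ _ _ h1 h2
  have santi : ∀ {x y : Fin n}, s x y → s y x → x = y :=
    fun h1 h2 => hs.1.2.1 _ _ h1 h2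
  have stot : ∀ x y : Fin n, s x y ∨ s y x := hs.2.1
  -- rank function for s
  set L : Fin n → ℕ := fun x => (Finset.univ.filter fun y => s y x ∧ y ≠ x).card with hLdef
  have hLmono : ∀ x y : Fin n, s x y → x ≠ y → L x < L y := by
    intro x y hxy hne
    apply Finset.card_lt_card
    constructor
    · intro z hz
      simp only [Finset.mem_filter, Finset.mem_univ, true_and] at hz ⊢
      refine ⟨strans hz.1 hxy, fun h => hz.2 ?_⟩
      subst h
      exact santi hz.1 hxy
    · intro hsub'
      have hx : x ∈ Finset.univ.filter fun z => s z y ∧ z ≠ y := by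
        simp only [Finset.mem_filter, Finset.mem_univ, true_and]
        exact ⟨hxy, hne⟩
      have := hsub' hx
      simp only [Finset.mem_filter, Finset.mem_univ, true_and] at this
      exact this.2 rfl
  have hLinj : Function.Injective L := by
    intro x y h
    by_contra hne
    rcases stot x y with hxy | hyx
    · exact absurd h (Nat.ne_of_lt (hLmono x y hxy hne))
    · exact absurd h.symm (Nat.ne_of_lt (hLmono y x hyx (Ne.symm hne)))
  have hLlt : ∀ x : Fin n, L x < n := by
    intro x
    have hsub' : (Finset.univ.filter fun y => s y x ∧ y ≠ x) ⊆ Finset.univ.erase x := by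
      intro z hz
      simp only [Finset.mem_filter, Finset.mem_univ, true_and] at hz
      exact Finset.mem_erase.2 ⟨hz.2, Finset.mem_univ z⟩
    calc L x ≤ (Finset.univ.erase x).card := Finset.card_le_card hsub'
      _ = n - 1 := by rw [Finset.card_erase_of_mem (Finset.mem_univ x), Finset.card_univ,
            Fintype.card_fin]
      _ < n := Nat.sub_lt hn one_pos
  -- the key function
  set B : Fin n → ℕ := fun x => if P.lt x d then 0 else if x = d then 2*n else 4*n with hBdef
  set T : Fin n → ℕ := fun x => if x = a then n else 0 with hTdef
  set f : Fin n → ℕ := fun x => B x + T x + L x with hfdef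
  have hBa : B a = 0 := by simp [hBdef, had]
  have hBd : B d = 2*n := by simp [hBdef, Plt_irrefl d]
  have hTa : T a = n := by simp [hTdef]
  have hTd : T d = 0 := by
    have : d ≠ a := (Plt_ne had).symm
    simp [hTdef, this]
  -- monotonicity of f w.r.t. P.lt
  have hfmono : ∀ x y : Fin n, P.lt x y → f x < f y := by
    intro x y hxy
    have hne : x ≠ y := Plt_ne hxy
    have hLxy : L x < L y := hLmono x y (hsub _ _ (Plt_le hxy)) hne
    have hLx := hLlt x
    have hLy := hLlt y
    by_cases hxd : P.lt x d
    · have hBx : B x = 0 := by simp [hBdef, hxd]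
      by_cases hyd : P.lt y d
      · have hBy : B y = 0 := by simp [hBdef, hyd]
        have hxa : x ≠ a := by
          intro h; subst h; exact hcov y ⟨hxy, hyd⟩
        have hTx : T x = 0 := by simp [hTdef, hxa]
        by_cases hya : y = a
        · have hTy : T y = n := by simp [hTdef, hya]
          simp only [hfdef, hBx, hBy, hTx, hTy]
          clear * - hLx hLxy
          omega
        · have hTy : T y = 0 := by simp [hTdef, hya]
          simp only [hfdef, hBx, hBy, hTx, hTy]
          clear * - hLxy
          omega
      · -- y = d or B y = 4n; in both cases B y ≥ 2n
        have hBy : 2*n ≤ B y := by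
          simp only [hBdef]
          rw [if_neg hyd]
          split_ifs <;> (clear * -; omega)
        have hTx : T x ≤ n := by simp only [hTdef]; split_ifs <;> (clear * -; omega)
        simp only [hfdef, hBx]
        clear * - hBy hTx hLx
        omega
    · by_cases hxe : x = d
      · have hBx : B x = 2*n := by simp [hBdef, hxd, hxe]
        have hTx : T x = 0 := by
          have hxa : x ≠ a := by rw [hxe]; exact (Plt_ne had).symm
          simp [hTdef, hxa]
        have hyd : ¬ P.lt y d := fun h => Plt_asymm hxy (hxe ▸ h)
        have hye : y ≠ d := fun h => hxd (h ▸ hxy)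
        have hBy : B y = 4*n := by simp [hBdef, hyd, hye]
        simp only [hfdef, hBx, hTx, hBy]
        clear * - hLx
        omega
      · have hBx : B x = 4*n := by simp [hBdef, hxd, hxe]
        have hyd : ¬ P.lt y d := fun h => hxd (Plt_trans hxy h)
        have hye : y ≠ d := fun h => hxd (h ▸ hxy)
        have hBy : B y = 4*n := by simp [hBdef, hyd, hye]
        have hya : y ≠ a := by
          intro h; subst h; exact hxd (Plt_trans hxy had)
        have hxa : x ≠ a := by
          intro h; subst h; exact hxd had
        have hTx : T x = 0 := by simp [hTdef, hxa]
        have hTy : T y = 0 := by simp [hTdef, hya]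
        simp only [hfdef, hBx, hBy, hTx, hTy]
        clear * - hLxy
        omega
  -- injectivity of f
  have hfinj : Function.Injective f := by
    intro x y h
    by_contra hne
    have hLne : L x ≠ L y := fun h' => hne (hLinj h')
    have hLx := hLlt x
    have hLy := hLlt y
    have hBx : B x = 0 ∨ B x = 2*n ∨ B x = 4*n := by
      simp only [hBdef]; split_ifs <;> simp
    have hBy : B y = 0 ∨ B y = 2*n ∨ B y = 4*n := by
      simp only [hBdef]; split_ifs <;> simp
    have hTx : T x = 0 ∨ T x = n := by
      simp only [hTdef]; split_ifs <;> simp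
    have hTy : T y = 0 ∨ T y = n := by
      simp only [hTdef]; split_ifs <;> simp
    simp only [hfdef] at h
    clear * - h hLne hLx hLy hBx hBy hTx hTy
    rcases hBx with h'|h'|h' <;> rcases hBy with h''|h''|h'' <;>
      rcases hTx with h3'|h3' <;> rcases hTy with h4'|h4' <;> omega
  -- nothing between f a and f d
  have hgap : ∀ x : Fin n, ¬ (f a < f x ∧ f x < f d) := by
    intro x ⟨hax, hxd⟩
    have hLx := hLlt x
    have hLa := hLlt a
    have hLd := hLlt d
    by_cases hx1 : P.lt x d
    · have hBx : B x = 0 := by simp [hBdef, hx1]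
      have hxa : x ≠ a := by
        intro h; subst h; exact lt_irrefl _ hax
      have hTx : T x = 0 := by simp [hTdef, hxa]
      simp only [hfdef, hBx, hTx, hBa, hTa] at hax
      clear * - hax hLx
      omega
    · by_cases hx2 : x = d
      · subst hx2; exact lt_irrefl _ hxd
      · have hBx : B x = 4*n := by simp [hBdef, hx1, hx2]
        simp only [hfdef, hBx, hBd, hTd] at hxd
        clear * - hxd hLd
        omega
  have hfad : f a < f d := by
    have hLa := hLlt a
    simp only [hfdef, hBa, hBd, hTa, hTd]
    clear * - hLa
    omega
  -- build the permutation from the key: rank counting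
  have hrank : ∀ x : Fin n, (Finset.univ.filter fun y => f y < f x).card < n := by
    intro x
    have hsub' : (Finset.univ.filter fun y => f y < f x) ⊆ Finset.univ.erase x := by
      intro z hz
      simp only [Finset.mem_filter, Finset.mem_univ, true_and] at hz
      refine Finset.mem_erase.2 ⟨fun h => ?_, Finset.mem_univ z⟩
      subst h; exact lt_irrefl _ hz
    calc (Finset.univ.filter fun y => f y < f x).card
        ≤ (Finset.univ.erase x).card := Finset.card_le_card hsub'
      _ = n - 1 := by rw [Finset.card_erase_of_mem (Finset.mem_univ x), Finset.card_univ,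
            Fintype.card_fin]
      _ < n := Nat.sub_lt hn one_pos
  let τ : Fin n → Fin n := fun x => ⟨(Finset.univ.filter fun y => f y < f x).card, hrank x⟩
  have hτmono : ∀ x y : Fin n, f x < f y → τ x < τ y := by
    intro x y hxy
    show ((Finset.univ.filter fun z => f z < f x).card : ℕ) <
      (Finset.univ.filter fun z => f z < f y).card
    apply Finset.card_lt_card
    constructor
    · intro z hz
      simp only [Finset.mem_filter, Finset.mem_univ, true_and] at hz ⊢
      exact lt_trans hz hxy
    · intro hsub'
      have hx : x ∈ Finset.univ.filter fun z => f z < f y := by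
        simp only [Finset.mem_filter, Finset.mem_univ, true_and]
        exact hxy
      have := hsub' hx
      simp only [Finset.mem_filter, Finset.mem_univ, true_and] at this
      exact lt_irrefl _ this
  have hτlt : ∀ x y : Fin n, τ x < τ y ↔ f x < f y := by
    intro x y
    refine ⟨fun h => ?_, hτmono x y⟩
    rcases lt_trichotomy (f x) (f y) with h' | h' | h'
    · exact h'
    · exact absurd (congrArg τ (hfinj h')) (Fin.ne_of_lt h)
    · exact absurd (Nat.lt_trans h (hτmono y x h')) (Nat.lt_irrefl _)
  have hτinj : Function.Injective τ := by
    intro x y h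
    by_contra hne
    have : f x ≠ f y := fun h' => hne (hfinj h')
    rcases lt_or_gt_of_ne this with h' | h'
    · exact absurd h (Fin.ne_of_lt (hτmono x y h'))
    · exact absurd h.symm (Fin.ne_of_lt (hτmono y x h'))
  have hτsurj : Function.Surjective τ := Finite.surjective_of_injective hτinj
  let σinv : Equiv.Perm (Fin n) := Equiv.ofBijective τ ⟨hτinj, hτsurj⟩
  refine ⟨σinv.symm, ?_, ?_, ?_, ?_⟩
  · intro x y hxy
    simp only [Equiv.Perm.inv_def, Equiv.symm_symm]
    exact (hτlt x y).2 (hfmono x y hxy)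
  · simp only [Equiv.Perm.inv_def, Equiv.symm_symm]
    exact (hτlt b a).2 (hfmono b a hba)
  · simp only [Equiv.Perm.inv_def, Equiv.symm_symm]
    have had' : (σinv a : Fin n) < σinv d := by
      show τ a < τ d
      exact (hτlt a d).2 hfad
    by_contra hne
    have had'' : ((σinv a : Fin n) : ℕ) < ((σinv d : Fin n) : ℕ) := had'
    have hlt : ((σinv a : Fin n) : ℕ) + 1 < ((σinv d : Fin n) : ℕ) :=
      lt_of_le_of_ne (Nat.succ_le_of_lt had'') (Ne.symm hne)
    obtain ⟨x, hx⟩ := hτsurj ⟨((σinv a : Fin n) : ℕ) + 1, lt_trans hlt (σinv d).2⟩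
    apply hgap x
    constructor
    · rw [← hτlt a x]
      show (σinv a : Fin n) < τ x
      rw [hx]
      exact Fin.mk_lt_mk.2 (Nat.lt_succ_self _)
    · rw [← hτlt x d]
      show τ x < (σinv d : Fin n)
      rw [hx]
      exact hlt
  · simp only [Equiv.Perm.inv_def, Equiv.symm_symm]
    exact (hτlt d c).2 (hfmono d c hdc)
end

section
/- Let P be a finite poset on [n] whose set of linear extensions is closed under (2-14-3 ↔ 2-41-3) and (3-14-2 ↔ 3-41-2) moves. Then P contains no 2-14-3, 3-14-2, 2-41-3, or 3-41-2 chains. -/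
/-- `σ` is a linear extension of the poset `P` on `[n]`. -/
def LinExt {n : ℕ} (P : PartialOrder (Fin n)) (σ : Equiv.Perm (Fin n)) : Prop :=
  ∀ a b : Fin n, P.lt a b → σ⁻¹ a < σ⁻¹ b

/-- The subsequence `σ_i σ_j σ_{j+1} σ_k` is an occurrence of one of the
vincular patterns 2-41-3, 2-14-3, 3-41-2, 3-14-2. -/
def PatternOcc {n : ℕ} (σ : Equiv.Perm (Fin n)) (i : Fin n) (j : ℕ)
    (hj : j + 1 < n) (k : Fin n) : Prop :=
  (σ ⟨j + 1, hj⟩ < σ i ∧ σ i < σ k ∧ σ k < σ ⟨j, Nat.lt_of_succ_lt hj⟩) ∨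
  (σ ⟨j, Nat.lt_of_succ_lt hj⟩ < σ i ∧ σ i < σ k ∧ σ k < σ ⟨j + 1, hj⟩) ∨
  (σ ⟨j + 1, hj⟩ < σ k ∧ σ k < σ i ∧ σ i < σ ⟨j, Nat.lt_of_succ_lt hj⟩) ∨
  (σ ⟨j, Nat.lt_of_succ_lt hj⟩ < σ k ∧ σ k < σ i ∧ σ i < σ ⟨j + 1, hj⟩)

/-- `ψ` is obtained from `σ` by a (2-14-3 ↔ 2-41-3) or (3-14-2 ↔ 3-41-2)
move: swapping the two adjacent middle entries of an occurrence of one of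
these vincular patterns. -/
def MoveRel {n : ℕ} (σ ψ : Equiv.Perm (Fin n)) : Prop :=
  ∃ (j : ℕ) (hj : j + 1 < n),
    ψ = σ * Equiv.swap ⟨j, Nat.lt_of_succ_lt hj⟩ ⟨j + 1, hj⟩ ∧
    ∃ i k : Fin n, i.1 < j ∧ j + 1 < k.1 ∧ PatternOcc σ i j hj k

/-!
Since `d` covers `a`, some linear extension `σ` lists `d` immediately after `a`; then `b`, `a`,
`d`, `c` occur in this order in `σ` and form an occurrence of one of the vincular patterns, so the
move swapping `a` and `d` is allowed. It produces a permutation listing `d` before `a`, which is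
not a linear extension.

Such a `σ` sorts the elements first by block — `{x < d} \ {a}`, then `a`, then `d`, then the
rest — and within a block along an arbitrary linear extension of the order.
-/

section CoverRank

variable {α : Type*} [PartialOrder α]

open Classical in
noncomputable def coverRank (a d x : α) : ℕ :=
  if x = a then 1 else if x = d then 2 else if x < d then 0 else 3

lemma coverRank_le_three (a d x : α) : coverRank a d x ≤ 3 := by
  unfold coverRank
  split_ifs <;> omega

lemma coverRank_mono {a d : α} (h : a ⋖ d) : Monotone (coverRank a d) := by
  have had : a ≠ d := h.lt.ne
  refine monotone_iff_forall_lt.2 fun x y hxy => ?_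
  by_cases hyd : y ≤ d
  · by_cases hxa : x = a
    · subst hxa
      rcases h.eq_or_eq hxy.le hyd with rfl | rfl
      · exact absurd hxy (lt_irrefl _)
      · simp [coverRank, had.symm]
    · have hxd : x < d := hxy.trans_le hyd
      simp [coverRank, hxa, hxd.ne, hxd]
  · have hya : y ≠ a := fun hya => hyd (hya ▸ h.lt.le)
    have hy : coverRank a d y = 3 := by
      have hy₁ : y ≠ d := fun hy => hyd hy.le
      have hy₂ : ¬y < d := fun hy => hyd hy.le
      simp [coverRank, hya, hy₁, hy₂]
    exact hy ▸ coverRank_le_three a d x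

lemma eq_or_eq_of_one_le_coverRank {a d z : α} (h₁ : 1 ≤ coverRank a d z)
    (h₂ : coverRank a d z ≤ 2) : z = a ∨ z = d := by
  unfold coverRank at h₁ h₂
  split_ifs at h₁ h₂ <;> first | omega | tauto

lemma exists_strictMono_of_covBy {a d : α} (h : a ⋖ d) :
    ∃ f : α → ℕ ×ₗ LinearExtension α,
      StrictMono f ∧ ∀ z, f a ≤ f z → f z ≤ f d → z = a ∨ z = d := by
  refine ⟨fun x => toLex (coverRank a d x, toLinearExtension x), fun x y hxy => ?_, fun z ha hd => ?_⟩
  · have hext : toLinearExtension x < toLinearExtension y :=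
      toLinearExtension.monotone.strictMono_of_injective (fun _ _ h => h) hxy
    exact Prod.Lex.toLex_lt_toLex'.2 ⟨coverRank_mono h hxy.le, fun _ => hext⟩
  · have hrank : coverRank a d a = 1 ∧ coverRank a d d = 2 := by
      simp [coverRank, h.lt.ne']
    exact eq_or_eq_of_one_le_coverRank (hrank.1 ▸ (Prod.Lex.toLex_le_toLex'.1 ha).1)
      (hrank.2 ▸ (Prod.Lex.toLex_le_toLex'.1 hd).1)

end CoverRank

section Sorting

variable {n : ℕ} {β : Type*} [LinearOrder β] {f : Fin n → β} {σ : Equiv.Perm (Fin n)}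

lemma inv_lt_inv_of_monotone_comp (hσ : Monotone (f ∘ σ)) {x y : Fin n} (h : f x < f y) :
    σ⁻¹ x < σ⁻¹ y := by
  by_contra! hle
  have := hσ hle
  simp only [Function.comp_apply, Equiv.Perm.coe_inv, Equiv.apply_symm_apply] at this
  exact this.not_gt h

lemma val_inv_eq_succ_of_monotone_comp (hσ : Monotone (f ∘ σ)) {a d : Fin n} (had : f a < f d)
    (hbetween : ∀ z, f a ≤ f z → f z ≤ f d → z = a ∨ z = d) :
    (σ⁻¹ d).val = (σ⁻¹ a).val + 1 := by
  have hlt : (σ⁻¹ a).val < (σ⁻¹ d).val := inv_lt_inv_of_monotone_comp hσ had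
  by_contra hne
  obtain ⟨m, hm⟩ : ∃ m : Fin n, m.val = (σ⁻¹ a).val + 1 := ⟨⟨_, by omega⟩, rfl⟩
  have ham := hσ (show σ⁻¹ a ≤ m from Fin.le_def.2 (by omega))
  have hmd := hσ (show m ≤ σ⁻¹ d from Fin.le_def.2 (by omega))
  simp only [Function.comp_apply, Equiv.Perm.coe_inv, Equiv.apply_symm_apply] at ham hmd
  rcases hbetween (σ m) ham hmd with h | h <;>
    have h' := congrArg Fin.val (Equiv.Perm.eq_inv_iff_eq.2 h) <;> omega

lemma linExt_sort {P : PartialOrder (Fin n)} (hf : ∀ ⦃x y⦄, P.lt x y → f x < f y) :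
    LinExt P (Tuple.sort f) :=
  fun _ _ h => inv_lt_inv_of_monotone_comp (Tuple.monotone_sort f) (hf h)

end Sorting

section Moves

variable {n : ℕ} {P : PartialOrder (Fin n)} {σ : Equiv.Perm (Fin n)} {a b c d : Fin n}

lemma moveRel_mul_swap (hσ : LinExt P σ) (hadj : (σ⁻¹ d).val = (σ⁻¹ a).val + 1)
    (hba : P.lt b a) (hdc : P.lt d c)
    (hpat : (a < b ∧ b < c ∧ c < d) ∨ (a < c ∧ c < b ∧ b < d) ∨
      (d < b ∧ b < c ∧ c < a) ∨ (d < c ∧ c < b ∧ b < a)) :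
    MoveRel σ (σ * Equiv.swap (σ⁻¹ a) (σ⁻¹ d)) := by
  have hj : (σ⁻¹ a).val + 1 < n := hadj ▸ (σ⁻¹ d).isLt
  have hd : (⟨(σ⁻¹ a).val + 1, hj⟩ : Fin n) = σ⁻¹ d := Fin.ext hadj.symm
  refine ⟨(σ⁻¹ a).val, hj, by rw [hd], σ⁻¹ b, σ⁻¹ c, hσ b a hba, ?_, ?_⟩
  · have := Fin.lt_def.1 (hσ d c hdc)
    omega
  · unfold PatternOcc
    rw [hd]
    simp only [Fin.eta, Equiv.Perm.coe_inv, Equiv.apply_symm_apply]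
    tauto

lemma not_linExt_mul_swap (had : P.lt a d) (hlt : σ⁻¹ a < σ⁻¹ d) :
    ¬ LinExt P (σ * Equiv.swap (σ⁻¹ a) (σ⁻¹ d)) := by
  intro hext
  have := hext a d had
  simp only [mul_inv_rev, Equiv.swap_inv, Equiv.Perm.mul_apply, Equiv.swap_apply_left,
    Equiv.swap_apply_right] at this
  omega

end Moves

/-- If the set of linear extensions of a poset `P` on `[n]` is closed under
(2-14-3 ↔ 2-41-3) and (3-14-2 ↔ 3-41-2) moves, then `P` contains no
2-14-3, 3-14-2, 2-41-3, or 3-41-2 chain. -/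
theorem no_pattern_chains_of_closed_under_moves {n : ℕ}
    (P : PartialOrder (Fin n))
    (hclosed : ∀ σ ψ : Equiv.Perm (Fin n), LinExt P σ → MoveRel σ ψ → LinExt P ψ) :
    ¬ ∃ a b c d : Fin n,
      P.lt b a ∧ P.lt a d ∧ (∀ z : Fin n, ¬ (P.lt a z ∧ P.lt z d)) ∧ P.lt d c ∧
      ((a < b ∧ b < c ∧ c < d) ∨   -- 2-14-3 chain
       (a < c ∧ c < b ∧ b < d) ∨   -- 3-14-2 chain
       (d < b ∧ b < c ∧ c < a) ∨   -- 2-41-3 chain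
       (d < c ∧ c < b ∧ b < a)) := by  -- 3-41-2 chain
  rintro ⟨a, b, c, d, hba, had, hcov, hdc, hpat⟩
  obtain ⟨f, hf, hbetween⟩ :=
    @exists_strictMono_of_covBy (Fin n) P a d ⟨had, fun z haz hzd => hcov z ⟨haz, hzd⟩⟩
  have hσ : LinExt P (Tuple.sort f) := linExt_sort hf
  have hadj := val_inv_eq_succ_of_monotone_comp (Tuple.monotone_sort f) (hf had) hbetween
  exact not_linExt_mul_swap had (Fin.lt_def.2 (by omega))
    (hclosed _ _ hσ (moveRel_mul_swap hσ hadj hba hdc hpat))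
end

section
/- The Baxter number B(n) = (1/C(n+1,1)) · (1/C(n+1,2)) · Σ_{k=1}^{n} C(n+1,k−1)·C(n+1,k)·C(n+1,k+1) is a positive integer for every n ≥ 1, and B(1) = 1, B(2) = 2, B(3) = 6, B(4) = 22. -/
/-!
Each summand `C(m, k-1) C(m, k) C(m, k+1)`, `m = n + 1`, is itself divisible by `m · C(m, 2)`;
we check this one prime power `p ^ e` at a time. From `C(m, s) ∣ C(m, j) C(j, s)` we get
`m ∣ C(m, i) · i` and `C(m, 2) ∣ C(m, j) C(j, 2)`. Among three consecutive integers there are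
always `i ≠ j` with `p ∤ i` and `p ∤ C(j, 2)` (for `p = 2` take `j ≡ 2, 3 mod 4`), so
`p ^ e ∣ m C(m, 2)` forces `p ^ e ∣ C(m, i) C(m, j)`, a factor of the summand.
-/

/-- The numerator sum in the definition of the Baxter numbers. -/
def baxterSum (n : ℕ) : ℕ :=
  ∑ k ∈ Finset.Icc 1 n,
    Nat.choose (n + 1) (k - 1) * Nat.choose (n + 1) k * Nat.choose (n + 1) (k + 1)

theorem choose_dvd_choose_mul_choose (m j s : ℕ) : m.choose s ∣ m.choose j * j.choose s := by
  rcases le_or_gt s j with hsj | hjs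
  · exact (Nat.choose_mul hsj).symm ▸ dvd_mul_right _ _
  · simp [Nat.choose_eq_zero_of_lt hjs]

theorem not_two_dvd_choose_two {j : ℕ} (hj : j % 4 = 2 ∨ j % 4 = 3) : ¬ 2 ∣ j.choose 2 := by
  rintro ⟨t, ht⟩
  obtain ⟨i, rfl⟩ : ∃ i, j = i + 1 := ⟨j - 1, by omega⟩
  have h := Nat.add_one_mul_choose_eq i 1
  rw [ht, Nat.choose_one_right] at h
  obtain ⟨q, rfl | rfl⟩ : ∃ q, i = 4 * q + 1 ∨ i = 4 * q + 2 := ⟨i / 4, by omega⟩ <;>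
    (ring_nf at h; omega)

theorem Nat.Prime.not_dvd_choose_two {p j : ℕ} (hp : p.Prime) (hj : ¬ p ∣ j) (hj' : ¬ p ∣ j - 1) :
    ¬ p ∣ j.choose 2 := by
  intro h
  have hdvd : j.choose 2 ∣ j * (j - 1) := by
    rw [Nat.choose_two_right]
    exact Nat.div_dvd_of_dvd (even_iff_two_dvd.1 (Nat.even_mul_pred_self j))
  exact (hp.dvd_mul.1 (h.trans hdvd)).elim hj hj'

theorem Nat.Prime.exists_ne_not_dvd_not_dvd_choose_two {p : ℕ} (hp : p.Prime) (n : ℕ) :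
    ∃ i ∈ Finset.Icc n (n + 2), ∃ j ∈ Finset.Icc n (n + 2),
      i ≠ j ∧ ¬ p ∣ i ∧ ¬ p ∣ j.choose 2 := by
  have mem : ∀ t ≤ 2, n + t ∈ Finset.Icc n (n + 2) := fun t ht =>
    Finset.mem_Icc.2 ⟨by omega, by omega⟩
  rcases hp.eq_two_or_odd with rfl | hodd
  · rcases (by omega : n % 4 = 0 ∨ n % 4 = 1 ∨ n % 4 = 2 ∨ n % 4 = 3) with h | h | h | h
    · exact ⟨n + 1, mem 1 (by omega), n + 2, mem 2 (by omega), by omega, by omega,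
        not_two_dvd_choose_two (by omega)⟩
    · exact ⟨n + 0, mem 0 (by omega), n + 1, mem 1 (by omega), by omega, by omega,
        not_two_dvd_choose_two (by omega)⟩
    · exact ⟨n + 1, mem 1 (by omega), n + 0, mem 0 (by omega), by omega, by omega,
        not_two_dvd_choose_two (by omega)⟩
    · exact ⟨n + 2, mem 2 (by omega), n + 0, mem 0 (by omega), by omega, by omega,
        not_two_dvd_choose_two (by omega)⟩
  · have apart : ∀ a b, a < b → b ≤ a + 2 → p ∣ a → ¬ p ∣ b := fun a b hab hb ha hpb => by
      have := Nat.le_of_dvd (by omega) (Nat.dvd_sub hpb ha)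
      have := hp.two_le
      omega
    by_cases h2 : p ∣ n + 2
    · have h0 : ¬ p ∣ n := fun h => apart n (n + 2) (by omega) le_rfl h h2
      have h1 : ¬ p ∣ n + 1 := fun h => apart (n + 1) (n + 2) (by omega) (by omega) h h2
      exact ⟨n + 0, mem 0 (by omega), n + 1, mem 1 (by omega), by omega, h0,
        hp.not_dvd_choose_two h1 (by simpa using h0)⟩
    by_cases h1 : p ∣ n + 1
    · have hn : n ≠ 0 := by rintro rfl; exact hp.not_dvd_one h1
      have h0 : ¬ p ∣ n := fun h => apart n (n + 1) (by omega) (by omega) h h1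
      have h0' : ¬ p ∣ n - 1 := fun h => apart (n - 1) (n + 1) (by omega) (by omega) h h1
      exact ⟨n + 2, mem 2 (by omega), n + 0, mem 0 (by omega), by omega, h2,
        hp.not_dvd_choose_two h0 h0'⟩
    · exact ⟨n + 1, mem 1 (by omega), n + 2, mem 2 (by omega), by omega, h1,
        hp.not_dvd_choose_two h2 (by simpa using h1)⟩

theorem mul_choose_two_dvd_prod_choose (m n : ℕ) :
    m * m.choose 2 ∣ ∏ j ∈ Finset.Icc n (n + 2), m.choose j := by
  refine (Nat.dvd_iff_prime_pow_dvd_dvd _ _).2 fun p e hp hpe => ?_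
  obtain ⟨i, hi, j, hj, hij, hpi, hpj⟩ := hp.exists_ne_not_dvd_not_dvd_choose_two n
  have hdvd : m * m.choose 2 ∣ m.choose i * m.choose j * (i * j.choose 2) := by
    have := Nat.mul_dvd_mul (choose_dvd_choose_mul_choose m i 1)
      (choose_dvd_choose_mul_choose m j 2)
    simpa only [Nat.choose_one_right, mul_mul_mul_comm] using this
  have hcop : Nat.Coprime (p ^ e) (i * j.choose 2) :=
    Nat.Coprime.pow_left e (hp.coprime_iff_not_dvd.2 fun h => (hp.dvd_mul.1 h).elim hpi hpj)
  calc p ^ e ∣ m.choose i * m.choose j := hcop.dvd_of_dvd_mul_right (hpe.trans hdvd)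
    _ = ∏ k ∈ {i, j}, m.choose k := (Finset.prod_pair hij).symm
    _ ∣ _ := Finset.prod_dvd_prod_of_subset _ _ _ (Finset.insert_subset hi (by simpa using hj))

theorem choose_one_mul_choose_two_dvd_baxterSum (n : ℕ) :
    (n + 1).choose 1 * (n + 1).choose 2 ∣ baxterSum n := by
  refine Finset.dvd_sum fun k hk => ?_
  obtain ⟨k, rfl⟩ : ∃ k', k = k' + 1 := ⟨k - 1, by grind⟩
  have := mul_choose_two_dvd_prod_choose (n + 1) k
  rw [Finset.prod_Icc_succ_top (by omega), Finset.prod_Icc_succ_top (by omega), Finset.Icc_self,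
    Finset.prod_singleton] at this
  simpa [Nat.choose_one_right] using this

theorem baxterSum_pos {n : ℕ} (hn : 1 ≤ n) : 0 < baxterSum n := by
  refine Finset.sum_pos (fun k hk => ?_) ⟨1, Finset.mem_Icc.2 ⟨le_rfl, hn⟩⟩
  have hk := Finset.mem_Icc.1 hk
  exact Nat.mul_pos (Nat.mul_pos (Nat.choose_pos (by omega)) (Nat.choose_pos (by omega)))
    (Nat.choose_pos (by omega))

/-- The Baxter number `B(n) = baxterSum n / (C(n+1,1) * C(n+1,2))` is always a
positive integer, and `B(1) = 1`, `B(2) = 2`, `B(3) = 6`, `B(4) = 22`. -/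
theorem baxter_number_integer_and_values :
    (∀ n : ℕ, 1 ≤ n →
      ∃ b : ℕ, 0 < b ∧
        Nat.choose (n + 1) 1 * Nat.choose (n + 1) 2 * b = baxterSum n) ∧
    Nat.choose 2 1 * Nat.choose 2 2 * 1 = baxterSum 1 ∧
    Nat.choose 3 1 * Nat.choose 3 2 * 2 = baxterSum 2 ∧
    Nat.choose 4 1 * Nat.choose 4 2 * 6 = baxterSum 3 ∧
    Nat.choose 5 1 * Nat.choose 5 2 * 22 = baxterSum 4 := by
  refine ⟨fun n hn => ?_, by decide, by decide, by decide, by decide⟩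
  obtain ⟨b, hb⟩ := choose_one_mul_choose_two_dvd_baxterSum n
  refine ⟨b, Nat.pos_of_ne_zero fun hb0 => ?_, hb.symm⟩
  exact (baxterSum_pos hn).ne' (by rw [hb, hb0, mul_zero])
end
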